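/- arXiv:2412.11104 — 3 statements merged into one kernel-verified Lean document; each statement's English description precedes it below -/
import Mathlib

section
/- Let K be an N×N real symmetric positive definite matrix and let f¹ and f⁰ be independent random vectors in ℝ^N, each distributed as the centered multivariate Gaussian with covariance K. For nonempty index sets A, B ⊆ {1,…,N} (the observed treatment and control indices), define the posterior-mean estimators m¹_A(m) = k_A(m)ᵀ K_A⁻¹ (f¹)_A and m⁰_B(m) = k_B(m)ᵀ K_B⁻¹ (f⁰)_B for each m ∈ {1,…,N}. Then the Bayesian expected PEHE equals the integrated posterior variance: E[ (1/N) Σ_{m=1}^N ( (m¹_A(m) − m⁰_B(m)) − (f¹_m − f⁰_m) )² ] = (1/N) Σ_{m=1}^N ( V_A(m) + V_B(m) ). -/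
open MeasureTheory ProbabilityTheory Matrix Finset

variable {N : ℕ}

/-- The centered multivariate Gaussian measure on `ℝ^N` with covariance matrix `K`:
the pushforward of the standard Gaussian product measure under multiplication by the
positive semidefinite square root of `K`. -/
noncomputable def multivariateGaussian (K : Matrix (Fin N) (Fin N) ℝ)
    (hK : K.PosSemidef) : Measure (Fin N → ℝ) :=
  Measure.map (fun x => ((hK.1.eigenvectorUnitary : Matrix (Fin N) (Fin N) ℝ) *
      diagonal (fun i => Real.sqrt (hK.1.eigenvalues i)) *
      (star hK.1.eigenvectorUnitary : Matrix (Fin N) (Fin N) ℝ)) *ᵥ x) (Measure.pi fun _ : Fin N => gaussianReal 0 1)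

/-- The principal submatrix of `K` indexed by the finite index set `A`. -/
noncomputable def subK (K : Matrix (Fin N) (Fin N) ℝ) (A : Finset (Fin N)) :
    Matrix {i // i ∈ A} {i // i ∈ A} ℝ :=
  K.submatrix (fun i => (i : Fin N)) (fun j => (j : Fin N))

/-- The kernel vector `k_A(m) = (K_{i m})_{i ∈ A}`. -/
noncomputable def kvec (K : Matrix (Fin N) (Fin N) ℝ) (A : Finset (Fin N))
    (m : Fin N) : {i // i ∈ A} → ℝ :=
  fun i => K (i : Fin N) m

/-- The Gaussian-process posterior-mean estimator at index `m` trained on the values of `f`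
at the indices in `A`: `m_A(m) = k_A(m)ᵀ K_A⁻¹ f_A`. -/
noncomputable def postMean (K : Matrix (Fin N) (Fin N) ℝ) (A : Finset (Fin N))
    (f : Fin N → ℝ) (m : Fin N) : ℝ :=
  kvec K A m ⬝ᵥ ((subK K A)⁻¹ *ᵥ fun i => f (i : Fin N))

/-- The (noiseless Gaussian-process) posterior variance at index `m` after observing the
indices in `A`: `V_A(m) = K_{mm} − k_A(m)ᵀ K_A⁻¹ k_A(m)`. -/
noncomputable def postVar (K : Matrix (Fin N) (Fin N) ℝ) (A : Finset (Fin N))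
    (m : Fin N) : ℝ :=
  K m m - kvec K A m ⬝ᵥ ((subK K A)⁻¹ *ᵥ kvec K A m)


section AuxPEHE
open Real

lemma integrable_pow_mul_gauss (n : ℕ) :
    Integrable (fun x : ℝ => x ^ n * rexp (-x ^ 2 / 2)) := by
  have h := integrable_rpow_mul_exp_neg_mul_sq (b := (1:ℝ)/2) (by norm_num)
    (s := (n : ℝ)) (by exact_mod_cast neg_one_lt_zero.trans_le (Nat.cast_nonneg n))
  convert h using 2 with x
  rw [Real.rpow_natCast]
  ring_nf

lemma int_gauss : ∫ x : ℝ, rexp (-x ^ 2 / 2) = √(2 * π) := by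
  have h := integral_gaussian ((1:ℝ)/2)
  rw [show π / ((1:ℝ)/2) = 2 * π by ring] at h
  rw [← h]
  congr 1 with x
  ring_nf

lemma int_x_gauss : ∫ x : ℝ, x * rexp (-x ^ 2 / 2) = 0 := by
  have h := integral_neg_eq_self (fun x : ℝ => x * rexp (-x ^ 2 / 2)) volume
  simp only [neg_mul, neg_sq] at h
  have h2 : ∫ x : ℝ, -(x * rexp (-x ^ 2 / 2)) = ∫ x : ℝ, x * rexp (-x ^ 2 / 2) := h
  rw [integral_neg] at h2
  linarith

lemma hasDerivAt_negexp (x : ℝ) :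
    HasDerivAt (fun y : ℝ => -rexp (-y ^ 2 / 2)) (x * rexp (-x ^ 2 / 2)) x := by
  have h1 : HasDerivAt (fun y : ℝ => -y ^ 2 / 2) (-x) x := by
    have := ((hasDerivAt_pow 2 x).neg).div_const 2
    refine this.congr_deriv ?_
    simp; ring
  have h2 := (h1.exp).neg
  refine h2.congr_deriv ?_
  ring

lemma int_x2_gauss : ∫ x : ℝ, x ^ 2 * rexp (-x ^ 2 / 2) = √(2 * π) := by
  have hu : ∀ x : ℝ, HasDerivAt (fun y : ℝ => y) (1 : ℝ) x := fun x => hasDerivAt_id x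
  have key := integral_mul_deriv_eq_deriv_mul_of_integrable
    (u := fun y : ℝ => y) (v := fun y : ℝ => -rexp (-y ^ 2 / 2))
    (u' := fun _ : ℝ => (1:ℝ)) (v' := fun y : ℝ => y * rexp (-y ^ 2 / 2))
    (fun x _ => hu x) (fun x _ => hasDerivAt_negexp x)
    ((integrable_pow_mul_gauss 2).congr (Filter.Eventually.of_forall fun x => by
      show x ^ 2 * rexp (-x ^ 2 / 2) = (fun y : ℝ => y) x * (x * rexp (-x ^ 2 / 2)); ring))
    (((integrable_pow_mul_gauss 0).congr (Filter.Eventually.of_forall fun x => by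
      show x ^ 0 * rexp (-x ^ 2 / 2) = rexp (-x ^ 2 / 2); ring)).neg.congr
      (Filter.Eventually.of_forall fun x => by simp))
    (((integrable_pow_mul_gauss 1).congr (Filter.Eventually.of_forall fun x => by
      show x ^ 1 * rexp (-x ^ 2 / 2) = x * rexp (-x ^ 2 / 2); ring)).neg.congr
      (Filter.Eventually.of_forall fun x => by
        show -(x * rexp (-x ^ 2 / 2)) = (fun y : ℝ => y) x * -rexp (-x ^ 2 / 2); ring))
  simp only [one_mul] at key
  rw [show (∫ x : ℝ, x ^ 2 * rexp (-x ^ 2 / 2)) = ∫ x : ℝ, x * (x * rexp (-x ^ 2 / 2)) by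
    congr 1 with x; ring, key, integral_neg, neg_neg, int_gauss]

lemma gpdf01 (x : ℝ) : gaussianPDFReal 0 1 x = (√(2 * π))⁻¹ * rexp (-x ^ 2 / 2) := by
  simp [gaussianPDFReal]

lemma gaussianReal01 :
    gaussianReal 0 1 = volume.withDensity (fun x => ENNReal.ofReal (gaussianPDFReal 0 1 x)) := by
  rw [gaussianReal_of_var_ne_zero 0 one_ne_zero]
  rfl

lemma integral_gaussianReal01 (g : ℝ → ℝ) :
    ∫ x, g x ∂(gaussianReal 0 1) = ∫ x, gaussianPDFReal 0 1 x * g x := by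
  rw [gaussianReal01]
  have : (fun x => ENNReal.ofReal (gaussianPDFReal 0 1 x))
      = fun x => (((gaussianPDFReal 0 1 x).toNNReal : NNReal) : ENNReal) := rfl
  rw [this, integral_withDensity_eq_integral_smul ((measurable_gaussianPDFReal 0 1).real_toNNReal) g]
  congr 1 with x
  simp [NNReal.smul_def, Real.coe_toNNReal _ (gaussianPDFReal_nonneg 0 1 x)]

lemma integrable_pow_gaussianReal (n : ℕ) :
    Integrable (fun x : ℝ => x ^ n) (gaussianReal 0 1) := by
  rw [gaussianReal01, integrable_withDensity_iff]
  · apply Integrable.congr (((integrable_pow_mul_gauss n).const_mul ((√(2 * π))⁻¹)).congr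
      (Filter.Eventually.of_forall fun x => rfl))
    refine Filter.Eventually.of_forall fun x => ?_
    show (√(2 * π))⁻¹ * (x ^ n * rexp (-x ^ 2 / 2))
        = x ^ n * (ENNReal.ofReal (gaussianPDFReal 0 1 x)).toReal
    rw [ENNReal.toReal_ofReal (gaussianPDFReal_nonneg 0 1 x), gpdf01]
    ring
  · exact (measurable_gaussianPDFReal 0 1).ennreal_ofReal
  · exact Filter.Eventually.of_forall fun x => ENNReal.ofReal_lt_top

lemma integral_id_gaussianReal : ∫ x, x ∂(gaussianReal 0 1) = 0 := by
  rw [integral_gaussianReal01]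
  calc ∫ x : ℝ, gaussianPDFReal 0 1 x * x
      = (√(2 * π))⁻¹ * ∫ x : ℝ, x * rexp (-x ^ 2 / 2) := by
        rw [← integral_const_mul]; congr 1 with x; rw [gpdf01]; ring
    _ = 0 := by rw [int_x_gauss]; ring

lemma integral_sq_gaussianReal : ∫ x, x ^ 2 ∂(gaussianReal 0 1) = 1 := by
  rw [integral_gaussianReal01]
  have h2π : (0:ℝ) < 2 * π := by positivity
  calc ∫ x : ℝ, gaussianPDFReal 0 1 x * x ^ 2
      = (√(2 * π))⁻¹ * ∫ x : ℝ, x ^ 2 * rexp (-x ^ 2 / 2) := by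
        rw [← integral_const_mul]; congr 1 with x; rw [gpdf01]; ring
    _ = 1 := by
        rw [int_x2_gauss, inv_mul_cancel₀]
        exact (Real.sqrt_pos.mpr h2π).ne'

def GR : Type := ℝ
def GR.toR : GR → ℝ := fun t => t
instance : MeasurableSpace GR := inferInstanceAs (MeasurableSpace ℝ)
noncomputable instance : MeasureSpace GR := ⟨gaussianReal 0 1⟩
instance : IsProbabilityMeasure (volume : Measure GR) :=
  inferInstanceAs (IsProbabilityMeasure (gaussianReal 0 1))
instance : SigmaFinite (volume : Measure GR) := inferInstanceAs (SigmaFinite (gaussianReal 0 1))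

lemma gauss_integrable_ite (i j k : Fin N) : Integrable
    (fun t : ℝ => (if k = i then t else 1) * (if k = j then t else 1)) (gaussianReal 0 1) := by
  rcases eq_or_ne k i with rfl | h <;> rcases eq_or_ne k j with rfl | h'
  · exact (integrable_pow_gaussianReal 2).congr
      (Filter.Eventually.of_forall fun t => by simp [pow_two])
  · exact (integrable_pow_gaussianReal 1).congr
      (Filter.Eventually.of_forall fun t => by simp [h'])
  · exact (integrable_pow_gaussianReal 1).congr
      (Filter.Eventually.of_forall fun t => by simp [h])
  · exact (integrable_pow_gaussianReal 0).congr
      (Filter.Eventually.of_forall fun t => by simp [h, h'])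

lemma gauss_integral_ite (i j k : Fin N) :
    (∫ t, (if k = i then t else 1) * (if k = j then t else 1) ∂(gaussianReal 0 1)) =
      if k = i then (if k = j then (if i = j then (1:ℝ) else 0) else 0) else (if k = j then 0 else 1) := by
  rcases eq_or_ne k i with h | h <;> rcases eq_or_ne k j with h' | h'
  · have : i = j := h ▸ h'
    simp only [if_pos h, if_pos h', if_pos this]
    calc (∫ t, t * t ∂(gaussianReal 0 1)) = ∫ t, t ^ 2 ∂(gaussianReal 0 1) := by
          congr 1 with t; rw [pow_two]
      _ = 1 := integral_sq_gaussianReal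
  · simp only [if_pos h, if_neg h', mul_one]
    exact _root_.integral_id_gaussianReal
  · simp only [if_neg h, if_pos h', one_mul]
    exact _root_.integral_id_gaussianReal
  · simp [if_neg h, if_neg h']

lemma pi_integrable_coord_mul (i j : Fin N) :
    Integrable (fun x : Fin N → ℝ => x i * x j)
      (Measure.pi fun _ : Fin N => gaussianReal 0 1) := by
  have h1 : Integrable (fun x : Fin N → GR =>
      ∏ k, (if k = i then GR.toR (x k) else 1) * (if k = j then GR.toR (x k) else 1)) volume :=
    Integrable.fintype_prod (f := fun k (t : GR) => (if k = i then GR.toR t else 1) *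
      (if k = j then GR.toR t else 1)) (fun k => gauss_integrable_ite i j k)
  have h2 : Integrable (fun x : Fin N → ℝ =>
      ∏ k, (if k = i then x k else 1) * (if k = j then x k else 1))
      (Measure.pi fun _ : Fin N => gaussianReal 0 1) := h1
  refine h2.congr (Filter.Eventually.of_forall fun x => ?_)
  show (∏ k, (if k = i then x k else 1) * (if k = j then x k else 1)) = x i * x j
  rw [Finset.prod_mul_distrib, Finset.prod_ite_eq', Finset.prod_ite_eq']
  simp

lemma pi_integral_coord_mul (i j : Fin N) :
    (∫ x : Fin N → ℝ, x i * x j ∂(Measure.pi fun _ : Fin N => gaussianReal 0 1)) =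
      if i = j then 1 else 0 := by
  have h1 : (∫ x : Fin N → GR,
        ∏ k, (if k = i then GR.toR (x k) else 1) * (if k = j then GR.toR (x k) else 1)) =
      ∏ k, ∫ t : GR, (if k = i then GR.toR t else 1) * (if k = j then GR.toR t else 1) :=
    integral_fintype_prod_eq_prod (fun k (t : GR) =>
      (if k = i then GR.toR t else 1) * (if k = j then GR.toR t else 1))
  have h2 : (∫ x : Fin N → ℝ, x i * x j ∂(Measure.pi fun _ : Fin N => gaussianReal 0 1)) =
      ∫ x : Fin N → ℝ, ∏ k, (if k = i then x k else 1) * (if k = j then x k else 1)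
        ∂(Measure.pi fun _ : Fin N => gaussianReal 0 1) := by
    congr 1 with x
    rw [Finset.prod_mul_distrib, Finset.prod_ite_eq', Finset.prod_ite_eq']
    simp
  rw [h2]
  have h3 : (∫ x : Fin N → ℝ, ∏ k, (if k = i then x k else 1) * (if k = j then x k else 1)
      ∂(Measure.pi fun _ : Fin N => gaussianReal 0 1)) =
      ∏ k, ∫ t, (if k = i then t else 1) * (if k = j then t else 1) ∂(gaussianReal 0 1) := h1
  rw [h3]
  rcases eq_or_ne i j with rfl | hij
  · rw [Finset.prod_eq_one]
    · simp
    intro k _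
    rw [gauss_integral_ite]
    rcases eq_or_ne k i with h | h <;> simp [h]
  · rw [Finset.prod_eq_zero (Finset.mem_univ i)]
    · simp [hij]
    rw [gauss_integral_ite]
    simp [hij]

lemma pi_integrable_coord (i : Fin N) :
    Integrable (fun x : Fin N → ℝ => x i)
      (Measure.pi fun _ : Fin N => gaussianReal 0 1) := by
  have hint : ∀ k : Fin N, Integrable
      (fun t : ℝ => if k = i then t else 1) (gaussianReal 0 1) := by
    intro k
    rcases eq_or_ne k i with rfl | h
    · exact (integrable_pow_gaussianReal 1).congr (Filter.Eventually.of_forall fun t => by simp)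
    · exact (integrable_pow_gaussianReal 0).congr (Filter.Eventually.of_forall fun t => by simp [h])
  have h1 : Integrable (fun x : Fin N → GR => ∏ k, (if k = i then GR.toR (x k) else 1)) volume :=
    Integrable.fintype_prod (f := fun k (t : GR) => (if k = i then GR.toR t else 1))
      (fun k => hint k)
  have h2 : Integrable (fun x : Fin N → ℝ => ∏ k, (if k = i then x k else 1))
      (Measure.pi fun _ : Fin N => gaussianReal 0 1) := h1
  refine h2.congr (Filter.Eventually.of_forall fun x => ?_)
  show (∏ k, (if k = i then x k else 1)) = x i
  rw [Finset.prod_ite_eq']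
  simp

lemma pi_integral_coord (i : Fin N) :
    (∫ x : Fin N → ℝ, x i ∂(Measure.pi fun _ : Fin N => gaussianReal 0 1)) = 0 := by
  have h1 : (∫ x : Fin N → GR, ∏ k, (if k = i then GR.toR (x k) else 1)) =
      ∏ k, ∫ t : GR, (if k = i then GR.toR t else 1) :=
    integral_fintype_prod_eq_prod (fun k (t : GR) => (if k = i then GR.toR t else 1))
  have h2 : (∫ x : Fin N → ℝ, x i ∂(Measure.pi fun _ : Fin N => gaussianReal 0 1)) =
      ∫ x : Fin N → ℝ, ∏ k, (if k = i then x k else 1)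
        ∂(Measure.pi fun _ : Fin N => gaussianReal 0 1) := by
    congr 1 with x
    rw [Finset.prod_ite_eq']
    simp
  rw [h2]
  have h3 : (∫ x : Fin N → ℝ, ∏ k, (if k = i then x k else 1)
      ∂(Measure.pi fun _ : Fin N => gaussianReal 0 1)) =
      ∏ k, ∫ t, (if k = i then t else 1) ∂(gaussianReal 0 1) := h1
  rw [h3, Finset.prod_eq_zero (Finset.mem_univ i)]
  simp [_root_.integral_id_gaussianReal]

lemma pi_integrable_dot (b : Fin N → ℝ) :
    Integrable (fun x : Fin N → ℝ => b ⬝ᵥ x)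
      (Measure.pi fun _ : Fin N => gaussianReal 0 1) := by
  simp only [dotProduct]
  exact integrable_finset_sum _ fun i _ => (pi_integrable_coord i).const_mul (b i)

lemma pi_integral_dot (b : Fin N → ℝ) :
    (∫ x : Fin N → ℝ, b ⬝ᵥ x ∂(Measure.pi fun _ : Fin N => gaussianReal 0 1)) = 0 := by
  simp only [dotProduct]
  rw [integral_finset_sum _ fun i _ => (pi_integrable_coord i).const_mul (b i)]
  refine Finset.sum_eq_zero fun i _ => ?_
  rw [integral_const_mul, pi_integral_coord, mul_zero]

lemma pi_integrable_dot_mul (b c : Fin N → ℝ) :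
    Integrable (fun x : Fin N → ℝ => (b ⬝ᵥ x) * (c ⬝ᵥ x))
      (Measure.pi fun _ : Fin N => gaussianReal 0 1) := by
  have : (fun x : Fin N → ℝ => (b ⬝ᵥ x) * (c ⬝ᵥ x)) =
      fun x => ∑ i, ∑ j, (b i * c j) * (x i * x j) := by
    funext x
    simp only [dotProduct, Finset.sum_mul_sum]
    exact Finset.sum_congr rfl fun i _ => Finset.sum_congr rfl fun j _ => by ring
  rw [this]
  exact integrable_finset_sum _ fun i _ =>
    integrable_finset_sum _ fun j _ => (pi_integrable_coord_mul i j).const_mul _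

lemma pi_integral_dot_mul (b c : Fin N → ℝ) :
    (∫ x : Fin N → ℝ, (b ⬝ᵥ x) * (c ⬝ᵥ x) ∂(Measure.pi fun _ : Fin N => gaussianReal 0 1)) =
      b ⬝ᵥ c := by
  have h : (fun x : Fin N → ℝ => (b ⬝ᵥ x) * (c ⬝ᵥ x)) =
      fun x => ∑ i, ∑ j, (b i * c j) * (x i * x j) := by
    funext x
    simp only [dotProduct, Finset.sum_mul_sum]
    exact Finset.sum_congr rfl fun i _ => Finset.sum_congr rfl fun j _ => by ring
  rw [h, integral_finset_sum _ fun i _ =>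
    integrable_finset_sum _ fun j _ => (pi_integrable_coord_mul i j).const_mul _]
  have : ∀ i : Fin N, (∫ x : Fin N → ℝ, ∑ j, (b i * c j) * (x i * x j)
      ∂(Measure.pi fun _ : Fin N => gaussianReal 0 1)) = b i * c i := by
    intro i
    rw [integral_finset_sum _ fun j _ => (pi_integrable_coord_mul i j).const_mul _]
    have : ∀ j : Fin N, (∫ x : Fin N → ℝ, (b i * c j) * (x i * x j)
        ∂(Measure.pi fun _ : Fin N => gaussianReal 0 1)) = if i = j then b i * c i else 0 := by
      intro j
      rw [integral_const_mul, pi_integral_coord_mul]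
      rcases eq_or_ne i j with rfl | hij
      · simp
      · simp [hij]
    rw [Finset.sum_congr rfl fun j _ => this j]
    simp
  rw [Finset.sum_congr rfl fun i _ => this i]
  rfl

lemma sum_dite_mul (A : Finset (Fin N)) (x : {i // i ∈ A} → ℝ) (c : Fin N → ℝ) :
    ∑ j : Fin N, (if h : j ∈ A then x ⟨j, h⟩ else 0) * c j
      = ∑ i : {i // i ∈ A}, x i * c (i : Fin N) := by
  classical
  rw [show (∑ j : Fin N, (if h : j ∈ A then x ⟨j, h⟩ else 0) * c j)
        = ∑ j ∈ A, (if h : j ∈ A then x ⟨j, h⟩ else 0) * c j from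
      (Finset.sum_subset (Finset.subset_univ A) (fun j _ hj => by simp [dif_neg hj])).symm,
    ← Finset.sum_attach A (fun j => (if h : j ∈ A then x ⟨j, h⟩ else 0) * c j),
    Finset.univ_eq_attach]
  exact Finset.sum_congr rfl fun p _ => by simp [dif_pos p.2]

lemma subK_posDef (K : Matrix (Fin N) (Fin N) ℝ) (hK : K.PosDef) (A : Finset (Fin N)) :
    (subK K A).PosDef := by
  classical
  refine PosDef.of_dotProduct_mulVec_pos (hK.isHermitian.submatrix _) fun x hx => ?_
  set y : Fin N → ℝ := fun j => if h : j ∈ A then x ⟨j, h⟩ else 0 with hy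
  have hy0 : y ≠ 0 := by
    obtain ⟨i, hi⟩ := Function.ne_iff.mp hx
    intro h0
    apply hi
    have := congrFun h0 (i : Fin N)
    simpa [hy, dif_pos i.2] using this
  have hpos := hK.dotProduct_mulVec_pos hy0
  have hxy : star x ⬝ᵥ (subK K A *ᵥ x) = star y ⬝ᵥ (K *ᵥ y) := by
    simp only [star_trivial]
    have hKy : ∀ j : Fin N, (K *ᵥ y) j = ∑ i : {i // i ∈ A}, x i * K j (i : Fin N) := by
      intro j
      show (fun j' => K j j') ⬝ᵥ y = _
      rw [dotProduct_comm]
      show ∑ j' : Fin N, (if h : j' ∈ A then x ⟨j', h⟩ else 0) * K j j' = _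
      exact sum_dite_mul A x (fun j' => K j j')
    calc x ⬝ᵥ (subK K A *ᵥ x)
        = ∑ i : {i // i ∈ A}, x i * (subK K A *ᵥ x) i := rfl
      _ = ∑ j : Fin N, y j * (K *ᵥ y) j := by
          rw [show (∑ j : Fin N, y j * (K *ᵥ y) j)
              = ∑ i : {i // i ∈ A}, x i * (K *ᵥ y) (i : Fin N) from
            sum_dite_mul A x (fun j => (K *ᵥ y) j)]
          refine Finset.sum_congr rfl fun i _ => ?_
          congr 1
          rw [hKy]
          show ∑ i' : {i // i ∈ A}, subK K A i i' * x i' = _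
          exact Finset.sum_congr rfl fun i' _ => by rw [mul_comm]; rfl
      _ = y ⬝ᵥ (K *ᵥ y) := rfl
  rw [hxy]
  exact hpos

noncomputable def dvec (K : Matrix (Fin N) (Fin N) ℝ) (A : Finset (Fin N)) (m : Fin N) :
    Fin N → ℝ :=
  fun j => if h : j ∈ A then (kvec K A m ᵥ* (subK K A)⁻¹) ⟨j, h⟩ else 0

noncomputable def uvec (K : Matrix (Fin N) (Fin N) ℝ) (A : Finset (Fin N)) (m : Fin N) :
    Fin N → ℝ :=
  fun j => dvec K A m j - (if j = m then 1 else 0)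

lemma dvec_dot (K : Matrix (Fin N) (Fin N) ℝ) (A : Finset (Fin N)) (m : Fin N)
    (f : Fin N → ℝ) : dvec K A m ⬝ᵥ f = postMean K A f m := by
  show ∑ j : Fin N, (if h : j ∈ A then (kvec K A m ᵥ* (subK K A)⁻¹) ⟨j, h⟩ else 0) * f j = _
  rw [sum_dite_mul, postMean, dotProduct_mulVec]
  rfl

lemma uvec_dot (K : Matrix (Fin N) (Fin N) ℝ) (A : Finset (Fin N)) (m : Fin N)
    (f : Fin N → ℝ) : uvec K A m ⬝ᵥ f = postMean K A f m - f m := by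
  have : uvec K A m ⬝ᵥ f = dvec K A m ⬝ᵥ f - ∑ j : Fin N, (if j = m then 1 else 0) * f j := by
    show ∑ j : Fin N, (dvec K A m j - (if j = m then 1 else 0)) * f j = _
    rw [show dvec K A m ⬝ᵥ f = ∑ j : Fin N, dvec K A m j * f j from rfl,
      ← Finset.sum_sub_distrib]
    exact Finset.sum_congr rfl fun j _ => by ring
  rw [this, dvec_dot]
  congr 1
  simp [ite_mul]

lemma uvec_quad (K : Matrix (Fin N) (Fin N) ℝ) (hKsymm : K.IsSymm) (hK : K.PosDef)
    (A : Finset (Fin N)) (m : Fin N) :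
    uvec K A m ⬝ᵥ (K *ᵥ uvec K A m) = postVar K A m := by
  classical
  set M := (subK K A)⁻¹ with hM
  set k := kvec K A m with hk
  have hsubsymm : (subK K A)ᵀ = subK K A := by
    ext i j
    show K (j : Fin N) (i : Fin N) = K (i : Fin N) (j : Fin N)
    exact congrFun (congrFun hKsymm _) _
  have hdet : IsUnit (subK K A).det := isUnit_iff_ne_zero.mpr (subK_posDef K hK A).det_pos.ne'
  have hMsub : M * subK K A = 1 := Matrix.nonsing_inv_mul _ hdet
  have hMT : Mᵀ = M := by rw [hM, Matrix.transpose_nonsing_inv, hsubsymm]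
  have hvM : ∀ v : {i // i ∈ A} → ℝ, v ᵥ* M = M *ᵥ v := fun v => by
    conv_lhs => rw [← hMT]
    rw [vecMul_transpose]
  have hvS : ∀ v : {i // i ∈ A} → ℝ, v ᵥ* subK K A = subK K A *ᵥ v := fun v => by
    conv_lhs => rw [← hsubsymm]
    rw [vecMul_transpose]
  have hcol : ∀ j, (fun i : {i // i ∈ A} => K j (i : Fin N)) = kvec K A j :=
    fun j => funext fun i => (congrFun (congrFun hKsymm _) _ : K (i : Fin N) j = K j (i : Fin N)).symm
  have h1 : ∀ j, (K *ᵥ uvec K A m) j = k ⬝ᵥ (M *ᵥ kvec K A j) - K j m := by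
    intro j
    have e1 : (K *ᵥ uvec K A m) j = (fun j' => K j j') ⬝ᵥ uvec K A m := rfl
    rw [e1, dotProduct_comm, uvec_dot]
    congr 1
    rw [postMean, ← hcol j]
  have hu := uvec_dot K A m (K *ᵥ uvec K A m)
  set g := K *ᵥ uvec K A m with hg
  have hgm : g m = k ⬝ᵥ (M *ᵥ k) - K m m := h1 m
  have hgA : (fun i : {i // i ∈ A} => g (i : Fin N)) = ((k ᵥ* M) ᵥ* subK K A) - k := by
    funext i
    rw [Pi.sub_apply, h1]
    congr 1
    rw [dotProduct_mulVec]
    rfl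
  have hpm : postMean K A g m = 0 := by
    rw [postMean, hgA, Matrix.mulVec_sub, hvS, mulVec_mulVec, hMsub, one_mulVec, hvM]
    simp [hM]
  rw [hu, hpm, hgm, postVar]
  ring

lemma measurable_dot (a : Fin N → ℝ) : Measurable (fun y : Fin N → ℝ => a ⬝ᵥ y) := by
  simp only [dotProduct]
  exact Finset.measurable_sum Finset.univ fun i _ => by fun_prop

lemma measurable_mulVec (S : Matrix (Fin N) (Fin N) ℝ) :
    Measurable (fun x : Fin N → ℝ => S *ᵥ x) :=
  measurable_pi_lambda _ fun i => measurable_dot (S i)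

noncomputable def Matrix.PosSemidef.sqrt {K : Matrix (Fin N) (Fin N) ℝ} (hK : K.PosSemidef) :
    Matrix (Fin N) (Fin N) ℝ :=
  (hK.1.eigenvectorUnitary : Matrix (Fin N) (Fin N) ℝ) *
      diagonal (fun i => Real.sqrt (hK.1.eigenvalues i)) *
      (star hK.1.eigenvectorUnitary : Matrix (Fin N) (Fin N) ℝ)

lemma Matrix.PosSemidef.sqrt_transpose {K : Matrix (Fin N) (Fin N) ℝ} (hK : K.PosSemidef) :
    hK.sqrtᵀ = hK.sqrt := by
  simp [Matrix.PosSemidef.sqrt, transpose_mul, Matrix.mul_assoc, ← conjTranspose_eq_transpose_of_trivial, Unitary.coe_star, star_eq_conjTranspose]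

lemma Matrix.PosSemidef.sqrt_mul_self {K : Matrix (Fin N) (Fin N) ℝ} (hK : K.PosSemidef) :
    hK.sqrt * hK.sqrt = K := by
  set U : Matrix (Fin N) (Fin N) ℝ := ↑hK.1.eigenvectorUnitary with hUdef
  set D := diagonal (fun i => Real.sqrt (hK.1.eigenvalues i)) with hDdef
  have hU : (star hK.1.eigenvectorUnitary : Matrix (Fin N) (Fin N) ℝ) * U = 1 :=
    Unitary.coe_star_mul_self _
  have hD : D * D = diagonal (RCLike.ofReal ∘ hK.1.eigenvalues) := by
    rw [hDdef, diagonal_mul_diagonal]; congr 1; funext i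
    simp [Real.mul_self_sqrt (hK.eigenvalues_nonneg i)]
  conv_rhs => rw [hK.1.spectral_theorem, Unitary.conjStarAlgAut_apply]
  show U * D * (star hK.1.eigenvectorUnitary : Matrix (Fin N) (Fin N) ℝ) *
    (U * D * (star hK.1.eigenvectorUnitary : Matrix (Fin N) (Fin N) ℝ)) = _
  rw [show U * D * (star hK.1.eigenvectorUnitary : Matrix (Fin N) (Fin N) ℝ) *
    (U * D * (star hK.1.eigenvectorUnitary : Matrix (Fin N) (Fin N) ℝ)) =
    U * (D * ((star hK.1.eigenvectorUnitary : Matrix (Fin N) (Fin N) ℝ) * U) * D) *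
      (star hK.1.eigenvectorUnitary : Matrix (Fin N) (Fin N) ℝ) by simp only [Matrix.mul_assoc],
    hU, Matrix.mul_one, hD]

section MVG

variable (K : Matrix (Fin N) (Fin N) ℝ) (hK : K.PosSemidef)

lemma sqrt_dot (a x : Fin N → ℝ) : a ⬝ᵥ (hK.sqrt *ᵥ x) = (hK.sqrt *ᵥ a) ⬝ᵥ x := by
  rw [dotProduct_mulVec]
  congr 1
  conv_lhs => rw [← hK.sqrt_transpose, vecMul_transpose]

lemma sqrt_dot_sq (a : Fin N → ℝ) : (hK.sqrt *ᵥ a) ⬝ᵥ (hK.sqrt *ᵥ a) = a ⬝ᵥ (K *ᵥ a) := by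
  conv_rhs => rw [← hK.sqrt_mul_self, ← mulVec_mulVec, sqrt_dot]

lemma mvg_integrable_sq (a : Fin N → ℝ) :
    Integrable (fun y : Fin N → ℝ => (a ⬝ᵥ y) ^ 2) (multivariateGaussian K hK) := by
  rw [_root_.multivariateGaussian, integrable_map_measure
    (((measurable_dot a).pow_const 2).aestronglyMeasurable) (measurable_mulVec _).aemeasurable]
  refine ((pi_integrable_dot_mul (hK.sqrt *ᵥ a) (hK.sqrt *ᵥ a)).congr
    (Filter.Eventually.of_forall fun x => ?_))
  show (hK.sqrt *ᵥ a) ⬝ᵥ x * ((hK.sqrt *ᵥ a) ⬝ᵥ x) = (a ⬝ᵥ (hK.sqrt *ᵥ x)) ^ 2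
  rw [sqrt_dot, pow_two]

lemma mvg_integral_sq (a : Fin N → ℝ) :
    ∫ y, (a ⬝ᵥ y) ^ 2 ∂(multivariateGaussian K hK) = a ⬝ᵥ (K *ᵥ a) := by
  rw [_root_.multivariateGaussian, integral_map (measurable_mulVec _).aemeasurable
    (((measurable_dot a).pow_const 2).aestronglyMeasurable)]
  calc (∫ x : Fin N → ℝ, (a ⬝ᵥ (hK.sqrt *ᵥ x)) ^ 2 ∂(Measure.pi fun _ => gaussianReal 0 1))
      = ∫ x : Fin N → ℝ, ((hK.sqrt *ᵥ a) ⬝ᵥ x) * ((hK.sqrt *ᵥ a) ⬝ᵥ x)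
          ∂(Measure.pi fun _ => gaussianReal 0 1) := by
        congr 1 with x
        rw [sqrt_dot, pow_two]
    _ = (hK.sqrt *ᵥ a) ⬝ᵥ (hK.sqrt *ᵥ a) := pi_integral_dot_mul _ _
    _ = a ⬝ᵥ (K *ᵥ a) := sqrt_dot_sq K hK a

lemma mvg_integrable_dot (a : Fin N → ℝ) :
    Integrable (fun y : Fin N → ℝ => a ⬝ᵥ y) (multivariateGaussian K hK) := by
  rw [_root_.multivariateGaussian, integrable_map_measure
    ((measurable_dot a).aestronglyMeasurable) (measurable_mulVec _).aemeasurable]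
  refine ((pi_integrable_dot (hK.sqrt *ᵥ a)).congr (Filter.Eventually.of_forall fun x => ?_))
  exact (sqrt_dot K hK a x).symm

lemma mvg_integral_dot (a : Fin N → ℝ) :
    ∫ y, a ⬝ᵥ y ∂(multivariateGaussian K hK) = 0 := by
  rw [_root_.multivariateGaussian, integral_map (measurable_mulVec _).aemeasurable
    ((measurable_dot a).aestronglyMeasurable)]
  calc (∫ x : Fin N → ℝ, a ⬝ᵥ (hK.sqrt *ᵥ x) ∂(Measure.pi fun _ => gaussianReal 0 1))
      = ∫ x : Fin N → ℝ, (hK.sqrt *ᵥ a) ⬝ᵥ x ∂(Measure.pi fun _ => gaussianReal 0 1) := by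
        congr 1 with x
        rw [sqrt_dot]
    _ = 0 := pi_integral_dot _

end MVG

section RV
variable {Ω : Type*} [MeasureSpace Ω] [IsProbabilityMeasure (ℙ : Measure Ω)]
  {K : Matrix (Fin N) (Fin N) ℝ} {hK : K.PosSemidef}
  {f : Ω → (Fin N → ℝ)}

lemma rv_integrable_sq (hfm : Measurable f)
    (hf : Measure.map f ℙ = multivariateGaussian K hK) (a : Fin N → ℝ) :
    Integrable (fun ω => (a ⬝ᵥ f ω) ^ 2) ℙ := by
  have h := mvg_integrable_sq K hK a
  rw [← hf] at h
  exact (integrable_map_measure (((measurable_dot a).pow_const 2).aestronglyMeasurable)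
    hfm.aemeasurable).mp h

lemma rv_integral_sq (hfm : Measurable f)
    (hf : Measure.map f ℙ = multivariateGaussian K hK) (a : Fin N → ℝ) :
    ∫ ω, (a ⬝ᵥ f ω) ^ 2 ∂ℙ = a ⬝ᵥ (K *ᵥ a) := by
  rw [← mvg_integral_sq K hK a, ← hf, integral_map hfm.aemeasurable
    (((measurable_dot a).pow_const 2).aestronglyMeasurable)]

lemma rv_integrable_dot (hfm : Measurable f)
    (hf : Measure.map f ℙ = multivariateGaussian K hK) (a : Fin N → ℝ) :
    Integrable (fun ω => a ⬝ᵥ f ω) ℙ := by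
  have h := mvg_integrable_dot K hK a
  rw [← hf] at h
  exact (integrable_map_measure ((measurable_dot a).aestronglyMeasurable)
    hfm.aemeasurable).mp h

lemma rv_integral_dot (hfm : Measurable f)
    (hf : Measure.map f ℙ = multivariateGaussian K hK) (a : Fin N → ℝ) :
    ∫ ω, a ⬝ᵥ f ω ∂ℙ = 0 := by
  rw [← mvg_integral_dot K hK a, ← hf, integral_map hfm.aemeasurable
    ((measurable_dot a).aestronglyMeasurable)]

end RV


end AuxPEHE

/-- Theorem 4.1, finite noiseless form: for independent centered Gaussian
random vectors `f¹, f⁰` with covariance `K` (symmetric positive definite), and nonempty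
observed treatment/control index sets `A, B`, the Bayesian expected PEHE of the posterior-mean
CATE estimator equals the integrated posterior variance:
`E[(1/N) Σ_m ((m¹_A(m) − m⁰_B(m)) − (f¹_m − f⁰_m))²] = (1/N) Σ_m (V_A(m) + V_B(m))`. -/
theorem expected_pehe_eq_integrated_postVar
    {Ω : Type*} [MeasureSpace Ω] [IsProbabilityMeasure (ℙ : Measure Ω)]
    (K : Matrix (Fin N) (Fin N) ℝ) (hKsymm : K.IsSymm) (hK : K.PosDef)
    (A B : Finset (Fin N)) (hA : A.Nonempty) (hB : B.Nonempty)
    (f1 f0 : Ω → (Fin N → ℝ)) (hf1meas : Measurable f1) (hf0meas : Measurable f0)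
    (hf1 : Measure.map f1 ℙ = multivariateGaussian K hK.posSemidef)
    (hf0 : Measure.map f0 ℙ = multivariateGaussian K hK.posSemidef)
    (hindep : IndepFun f1 f0 ℙ) :
    ∫ ω, (1 / (N : ℝ)) *
        ∑ m, ((postMean K A (f1 ω) m - postMean K B (f0 ω) m) - (f1 ω m - f0 ω m)) ^ 2 ∂ℙ =
      (1 / (N : ℝ)) * ∑ m, (postVar K A m + postVar K B m) := by
  have hterm : ∀ (m : Fin N) (ω : Ω),
      ((postMean K A (f1 ω) m - postMean K B (f0 ω) m) - (f1 ω m - f0 ω m)) ^ 2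
        = (uvec K A m ⬝ᵥ f1 ω) ^ 2 - 2 * ((uvec K A m ⬝ᵥ f1 ω) * (uvec K B m ⬝ᵥ f0 ω))
          + (uvec K B m ⬝ᵥ f0 ω) ^ 2 := by
    intro m ω
    rw [uvec_dot, uvec_dot]
    ring
  have hintA : ∀ m : Fin N, Integrable (fun ω => (uvec K A m ⬝ᵥ f1 ω) ^ 2) ℙ :=
    fun m => rv_integrable_sq (K := K) (hK := hK.posSemidef) hf1meas hf1 _
  have hintB : ∀ m : Fin N, Integrable (fun ω => (uvec K B m ⬝ᵥ f0 ω) ^ 2) ℙ :=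
    fun m => rv_integrable_sq (K := K) (hK := hK.posSemidef) hf0meas hf0 _
  have hindepC : ∀ m m' : Fin N,
      IndepFun (fun ω => uvec K A m ⬝ᵥ f1 ω) (fun ω => uvec K B m' ⬝ᵥ f0 ω) ℙ :=
    fun m m' => hindep.comp (measurable_dot (uvec K A m)) (measurable_dot (uvec K B m'))
  have hintC : ∀ m : Fin N,
      Integrable (fun ω => (uvec K A m ⬝ᵥ f1 ω) * (uvec K B m ⬝ᵥ f0 ω)) ℙ := by
    intro m
    have := (hindepC m m).integrable_mul
      (rv_integrable_dot (K := K) (hK := hK.posSemidef) hf1meas hf1 (uvec K A m))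
      (rv_integrable_dot (K := K) (hK := hK.posSemidef) hf0meas hf0 (uvec K B m))
    exact this.congr (Filter.Eventually.of_forall fun ω => rfl)
  have hintTerm : ∀ m : Fin N, Integrable (fun ω =>
      ((postMean K A (f1 ω) m - postMean K B (f0 ω) m) - (f1 ω m - f0 ω m)) ^ 2) ℙ := by
    intro m
    refine (((hintA m).sub ((hintC m).const_mul 2)).add (hintB m)).congr
      (Filter.Eventually.of_forall fun ω => (hterm m ω).symm)
  have hcross : ∀ m : Fin N, ∫ ω, (uvec K A m ⬝ᵥ f1 ω) * (uvec K B m ⬝ᵥ f0 ω) ∂ℙ = 0 := by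
    intro m
    have h := (hindepC m m).integral_mul_eq_mul_integral
      ((measurable_dot (uvec K A m)).comp hf1meas).aestronglyMeasurable
      ((measurable_dot (uvec K B m)).comp hf0meas).aestronglyMeasurable
    have h2 : ∫ ω, (uvec K A m ⬝ᵥ f1 ω) * (uvec K B m ⬝ᵥ f0 ω) ∂ℙ
        = (∫ ω, uvec K A m ⬝ᵥ f1 ω ∂ℙ) * ∫ ω, uvec K B m ⬝ᵥ f0 ω ∂ℙ := h
    rw [h2, rv_integral_dot (K := K) (hK := hK.posSemidef) hf1meas hf1,
      rv_integral_dot (K := K) (hK := hK.posSemidef) hf0meas hf0, mul_zero]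
  have hmain : ∀ m : Fin N, ∫ ω,
      ((postMean K A (f1 ω) m - postMean K B (f0 ω) m) - (f1 ω m - f0 ω m)) ^ 2 ∂ℙ
        = postVar K A m + postVar K B m := by
    intro m
    rw [integral_congr_ae (Filter.Eventually.of_forall fun ω => hterm m ω)]
    have e1 := integral_add (μ := ℙ) ((hintA m).sub ((hintC m).const_mul 2)) (hintB m)
    simp only [Pi.add_apply, Pi.sub_apply] at e1
    have e2 := integral_sub (μ := ℙ) (hintA m) ((hintC m).const_mul 2)
    rw [e1, e2, integral_const_mul, hcross m,
      rv_integral_sq (K := K) (hK := hK.posSemidef) hf1meas hf1,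
      rv_integral_sq (K := K) (hK := hK.posSemidef) hf0meas hf0,
      uvec_quad K hKsymm hK, uvec_quad K hKsymm hK]
    ring
  rw [integral_const_mul, integral_finset_sum _ fun m _ => hintTerm m]
  congr 1
  exact Finset.sum_congr rfl fun m _ => hmain m
end

section
/- Let K be an N×N real symmetric matrix, A ⊆ {1,…,N} an index set with K_A positive definite, and j ∉ A an index with V_A(j) > 0. Then the integrated posterior variance after adding index j satisfies (1/N) Σ_{m=1}^N V_{A∪{j}}(m) = (1/N) Σ_{m=1}^N V_A(m) − (1/N) Σ_{m=1}^N ( k_A(j)ᵀ K_A⁻¹ k_A(m) − K_{jm} )² / V_A(j); consequently, over any finite set of admissible candidate indices j, minimizing the integrated posterior variance (1/N) Σ_m V_{A∪{j}}(m) is equivalent to maximizing Σ_{m=1}^N ( k_A(j)ᵀ K_A⁻¹ k_A(m) − K_{jm} )² / V_A(j). -/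
open Matrix Finset

variable {N : ℕ}

/-- ABC3's acquisition gain for candidate `j` given observed set `A`:
`Σ_{m=1}^N (k_A(j)ᵀ K_A⁻¹ k_A(m) − K_{jm})² / V_A(j)`. -/
noncomputable def gain (K : Matrix (Fin N) (Fin N) ℝ) (A : Finset (Fin N))
    (j : Fin N) : ℝ :=
  ∑ m, (kvec K A j ⬝ᵥ ((subK K A)⁻¹ *ᵥ kvec K A m) - K j m) ^ 2 / postVar K A j

lemma sum_subtype_insert' {j : Fin N} {A : Finset (Fin N)} (hj : j ∉ A)
    (f : Fin N → ℝ) :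
    ∑ l : {i // i ∈ insert j A}, f (l : Fin N)
      = f j + ∑ l : {i // i ∈ A}, f (l : Fin N) := by
  rw [Finset.sum_coe_sort, Finset.sum_coe_sort, Finset.sum_insert hj]

lemma dot_symm' {ι : Type*} [Fintype ι] (M : Matrix ι ι ℝ) (hM : Mᵀ = M)
    (a b : ι → ℝ) : a ⬝ᵥ (M *ᵥ b) = b ⬝ᵥ (M *ᵥ a) := by
  rw [dotProduct_mulVec, ← mulVec_transpose, hM, dotProduct_comm]

lemma postVar_insert (K : Matrix (Fin N) (Fin N) ℝ) (hKsymm : K.IsSymm)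
    (A : Finset (Fin N)) (hA : (subK K A).PosDef) {j : Fin N} (hj : j ∉ A)
    (hV : 0 < postVar K A j) (m : Fin N) :
    postVar K (insert j A) m = postVar K A m -
      (kvec K A j ⬝ᵥ ((subK K A)⁻¹ *ᵥ kvec K A m) - K j m) ^ 2 / postVar K A j := by
  have hdet : (subK K A).det ≠ 0 := hA.det_pos.ne'
  have hKAsymm : (subK K A)ᵀ = subK K A := by
    ext i l
    simp only [Matrix.transpose_apply, subK, Matrix.submatrix_apply]
    exact hKsymm.apply _ _
  have hKAinv_symm : ((subK K A)⁻¹)ᵀ = (subK K A)⁻¹ := by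
    rw [Matrix.transpose_nonsing_inv, hKAsymm]
  set V := postVar K A j with hVdef
  set u : {i // i ∈ A} → ℝ := (subK K A)⁻¹ *ᵥ kvec K A j with hudef
  set x : {i // i ∈ A} → ℝ := (subK K A)⁻¹ *ᵥ kvec K A m with hxdef
  have hu : subK K A *ᵥ u = kvec K A j := by
    rw [hudef, Matrix.mulVec_mulVec, Matrix.mul_nonsing_inv _ (isUnit_iff_ne_zero.2 hdet),
      Matrix.one_mulVec]
  have hx' : subK K A *ᵥ x = kvec K A m := by
    rw [hxdef, Matrix.mulVec_mulVec, Matrix.mul_nonsing_inv _ (isUnit_iff_ne_zero.2 hdet),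
      Matrix.one_mulVec]
  have hju : kvec K A j ⬝ᵥ u = K j j - V := by
    have h : V = K j j - kvec K A j ⬝ᵥ u := rfl
    linarith
  have hmu : kvec K A m ⬝ᵥ u = kvec K A j ⬝ᵥ x :=
    dot_symm' _ hKAinv_symm _ _
  set e := kvec K A j ⬝ᵥ x - K j m with hedef
  set c := -(e / V) with hcdef
  -- invertibility of the enlarged matrix
  have hKBdet : (subK K (insert j A)).det ≠ 0 := by
    intro h0
    obtain ⟨z, hz, hz0⟩ := (Matrix.exists_mulVec_eq_zero_iff).2 h0
    set zf : Fin N → ℝ := fun v => if h : v ∈ insert j A then z ⟨v, h⟩ else 0 with hzf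
    have hz_eq : ∀ l : {i // i ∈ insert j A}, z l = zf l := by
      rintro ⟨l, hl⟩
      rw [hzf]
      show z ⟨l, hl⟩ = if h : l ∈ insert j A then z ⟨l, h⟩ else 0
      rw [dif_pos hl]
    set zA : {i // i ∈ A} → ℝ := fun l => zf l with hzA
    set t : ℝ := zf j with ht
    have hrow : ∀ i : {i // i ∈ insert j A},
        K i j * t + ∑ l : {i // i ∈ A}, K i l * zf l = 0 := by
      intro i
      have h1 := congrFun hz0 i
      have h2 : (subK K (insert j A) *ᵥ z) i
          = K (i : Fin N) j * zf j + ∑ l : {i // i ∈ A}, K (i : Fin N) l * zf l := by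
        have hb : (subK K (insert j A) *ᵥ z) i
            = ∑ l : {i // i ∈ insert j A}, K (i : Fin N) (l : Fin N) * zf (l : Fin N) := by
          simp only [Matrix.mulVec, dotProduct, subK, Matrix.submatrix_apply]
          exact Finset.sum_congr rfl fun l _ => by rw [hz_eq]
        rw [hb]
        exact sum_subtype_insert' hj (fun v => K (i : Fin N) v * zf v)
      rw [h2] at h1
      simpa using h1
    have hKAz : subK K A *ᵥ zA = -(t • kvec K A j) := by
      funext i
      have h3 := hrow ⟨i, mem_insert_of_mem i.2⟩
      have h4 : (subK K A *ᵥ zA) i = ∑ l : {i // i ∈ A}, K i l * zf l := rfl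
      have h5 : (-(t • kvec K A j)) i = -(t * K i j) := rfl
      rw [h4, h5]
      linarith
    have hzAu : zA = -(t • u) := by
      have h3 : (subK K A)⁻¹ *ᵥ (subK K A *ᵥ zA) = zA := by
        rw [Matrix.mulVec_mulVec, Matrix.nonsing_inv_mul _ (isUnit_iff_ne_zero.2 hdet),
          Matrix.one_mulVec]
      rw [hKAz] at h3
      rw [← h3, Matrix.mulVec_neg, Matrix.mulVec_smul]
    have hrowj := hrow ⟨j, mem_insert_self j A⟩
    have hjsum : ∑ l : {i // i ∈ A}, K j l * zf l = kvec K A j ⬝ᵥ zA := by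
      simp only [dotProduct, kvec]
      exact Finset.sum_congr rfl fun l _ => by rw [hKsymm.apply]
    rw [hjsum, hzAu] at hrowj
    have hdz : kvec K A j ⬝ᵥ -(t • u) = -(t * (K j j - V)) := by
      rw [dotProduct_neg, dotProduct_smul, hju]
      simp [smul_eq_mul]
    rw [hdz] at hrowj
    have htv : t * V = 0 := by
      have : (K j j : ℝ) * t + -(t * (K j j - V)) = t * V := by ring
      rw [← this]
      simpa using hrowj
    have ht0 : t = 0 := by
      rcases mul_eq_zero.1 htv with h | h
      · exact h
      · exact absurd h hV.ne'
    have hzA0 : zA = 0 := by rw [hzAu, ht0]; simp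
    apply hz
    funext l
    rw [hz_eq l]
    rcases Finset.mem_insert.1 l.2 with h | h
    · show zf l.val = 0
      rw [h, ← ht, ht0]
    · have h6 : zf l.val = zA ⟨l.val, h⟩ := rfl
      rw [h6, hzA0]; rfl
  -- the explicit solution for the enlarged system
  set yf : Fin N → ℝ := fun v => if h : v ∈ A then x ⟨v, h⟩ - c * u ⟨v, h⟩ else c with hyf
  set y : {i // i ∈ insert j A} → ℝ := fun l => yf l with hy
  have hyA : ∀ l : {i // i ∈ A}, yf l = x l - c * u l := by
    rintro ⟨l, hl⟩
    rw [hyf]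
    show (if h : l ∈ A then x ⟨l, h⟩ - c * u ⟨l, h⟩ else c) = x ⟨l, hl⟩ - c * u ⟨l, hl⟩
    rw [dif_pos hl]
  have hyj : yf j = c := by simp [hyf, hj]
  have hsplit : ∀ g : Fin N → ℝ, ∀ i0 : {i // i ∈ insert j A},
      True := fun _ _ => trivial
  have hKBy : subK K (insert j A) *ᵥ y = kvec K (insert j A) m := by
    funext i
    have h2 : (subK K (insert j A) *ᵥ y) i
        = K (i : Fin N) j * yf j + ∑ l : {i // i ∈ A}, K (i : Fin N) l * yf l := by
      have hb : (subK K (insert j A) *ᵥ y) i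
          = ∑ l : {i // i ∈ insert j A}, K (i : Fin N) (l : Fin N) * yf (l : Fin N) := rfl
      rw [hb]
      exact sum_subtype_insert' hj (fun v => K (i : Fin N) v * yf v)
    rw [h2, hyj]
    have hsumA : ∑ l : {i // i ∈ A}, K (i : Fin N) l * yf l
        = (∑ l : {i // i ∈ A}, K (i : Fin N) l * x l)
          - c * ∑ l : {i // i ∈ A}, K (i : Fin N) l * u l := by
      rw [Finset.mul_sum, ← Finset.sum_sub_distrib]
      exact Finset.sum_congr rfl fun l _ => by rw [hyA l]; ring
    rw [hsumA]
    rcases Finset.mem_insert.1 i.2 with hij | hiA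
    · -- row j
      have hxj : ∑ l : {i // i ∈ A}, K (i : Fin N) l * x l = kvec K A j ⬝ᵥ x := by
        simp only [dotProduct, kvec, hij]
        exact Finset.sum_congr rfl fun l _ => by rw [hKsymm.apply]
      have huj : ∑ l : {i // i ∈ A}, K (i : Fin N) l * u l = kvec K A j ⬝ᵥ u := by
        simp only [dotProduct, kvec, hij]
        exact Finset.sum_congr rfl fun l _ => by rw [hKsymm.apply]
      have hkv : kvec K (insert j A) m i = K j m := by
        simp only [kvec, hij]
      rw [hxj, huj, hju, hkv, hij, hcdef, hedef]
      field_simp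
      ring
    · -- row in A
      have hxi : ∑ l : {i // i ∈ A}, K (i : Fin N) l * x l = (subK K A *ᵥ x) ⟨i, hiA⟩ := rfl
      have hui : ∑ l : {i // i ∈ A}, K (i : Fin N) l * u l = (subK K A *ᵥ u) ⟨i, hiA⟩ := rfl
      rw [hxi, hui, hx', hu]
      have h7 : kvec K A m ⟨(i : Fin N), hiA⟩ = K i m := rfl
      have h8 : kvec K A j ⟨(i : Fin N), hiA⟩ = K i j := rfl
      have h9 : kvec K (insert j A) m i = K i m := rfl
      rw [h7, h8, h9]
      ring
  have hinvy : (subK K (insert j A))⁻¹ *ᵥ kvec K (insert j A) m = y := by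
    rw [← hKBy, Matrix.mulVec_mulVec, Matrix.nonsing_inv_mul _ (isUnit_iff_ne_zero.2 hKBdet),
      Matrix.one_mulVec]
  have hdot : kvec K (insert j A) m ⬝ᵥ y = kvec K A m ⬝ᵥ x + e ^ 2 / V := by
    have h2 : kvec K (insert j A) m ⬝ᵥ y
        = K j m * yf j + ∑ l : {i // i ∈ A}, K (l : Fin N) m * yf l := by
      have hb : kvec K (insert j A) m ⬝ᵥ y
          = ∑ l : {i // i ∈ insert j A}, K (l : Fin N) m * yf (l : Fin N) := rfl
      rw [hb]
      exact sum_subtype_insert' hj (fun v => K v m * yf v)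
    rw [h2, hyj]
    have hsumA : ∑ l : {i // i ∈ A}, K (l : Fin N) m * yf l
        = kvec K A m ⬝ᵥ x - c * (kvec K A m ⬝ᵥ u) := by
      simp only [dotProduct, kvec, Finset.mul_sum, ← Finset.sum_sub_distrib]
      exact Finset.sum_congr rfl fun l _ => by rw [hyA l]; ring
    rw [hsumA, hmu]
    have he : kvec K A j ⬝ᵥ x = e + K j m := by rw [hedef]; ring
    rw [he, hcdef]
    field_simp
    ring
  have hq : postVar K (insert j A) m = K m m - (kvec K A m ⬝ᵥ x + e ^ 2 / V) := by
    rw [postVar, hinvy, hdot]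
  rw [hq]
  have hpA : postVar K A m = K m m - kvec K A m ⬝ᵥ x := rfl
  rw [hpA, hedef, hVdef]
  ring

/-- Proposition 4.2, noiseless case: the integrated posterior variance after
adding one admissible index `j` decreases by exactly `(1/N)·gain(j)`, hence over any finite
set of admissible candidates, minimizing the integrated posterior variance is equivalent to
maximizing the gain. -/
theorem integrated_postVar_update_and_argmin (K : Matrix (Fin N) (Fin N) ℝ)
    (hKsymm : K.IsSymm) (A : Finset (Fin N)) (hA : (subK K A).PosDef) :
    (∀ j : Fin N, j ∉ A → 0 < postVar K A j →
      (1 / (N : ℝ)) * ∑ m, postVar K (insert j A) m =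
        (1 / (N : ℝ)) * ∑ m, postVar K A m - (1 / (N : ℝ)) * gain K A j) ∧
    (∀ S : Finset (Fin N), (∀ j ∈ S, j ∉ A ∧ 0 < postVar K A j) →
      ∀ j₀ ∈ S,
        ((∀ j ∈ S, (1 / (N : ℝ)) * ∑ m, postVar K (insert j₀ A) m ≤
            (1 / (N : ℝ)) * ∑ m, postVar K (insert j A) m) ↔
          (∀ j ∈ S, gain K A j ≤ gain K A j₀))) := by
  have part1 : ∀ j : Fin N, j ∉ A → 0 < postVar K A j →
      (1 / (N : ℝ)) * ∑ m, postVar K (insert j A) m =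
        (1 / (N : ℝ)) * ∑ m, postVar K A m - (1 / (N : ℝ)) * gain K A j := by
    intro j hj hV
    have hsum : ∑ m, postVar K (insert j A) m = ∑ m, postVar K A m - gain K A j := by
      rw [gain, ← Finset.sum_sub_distrib]
      exact Finset.sum_congr rfl fun m _ => postVar_insert K hKsymm A hA hj hV m
    rw [hsum, mul_sub]
  refine ⟨part1, fun S hS j₀ hj₀ => ?_⟩
  have hN : 0 < 1 / (N : ℝ) := by
    have h1 : 0 < N := j₀.pos
    have h2 : 0 < (N : ℝ) := Nat.cast_pos.2 h1
    positivity
  have key : ∀ j ∈ S, (1 / (N : ℝ)) * ∑ m, postVar K (insert j A) m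
      = (1 / (N : ℝ)) * ∑ m, postVar K A m - (1 / (N : ℝ)) * gain K A j :=
    fun j hjS => part1 j (hS j hjS).1 (hS j hjS).2
  constructor
  · intro h j hjS
    have h1 := h j hjS
    rw [key j₀ hj₀, key j hjS] at h1
    have h2 : (1 / (N : ℝ)) * gain K A j ≤ (1 / (N : ℝ)) * gain K A j₀ := by linarith
    exact le_of_mul_le_mul_left h2 hN
  · intro h j hjS
    have h1 := h j hjS
    rw [key j₀ hj₀, key j hjS]
    have h2 := mul_le_mul_of_nonneg_left h1 hN.le
    linarith
end

section
/- Let K be an N×N real symmetric positive semidefinite matrix with largest eigenvalue λ*, let p ∈ ℝ^N be the uniform vector with all entries 1/N, and let I ⊆ {1,…,N} be a nonempty index set with |I| = n satisfying ε*(I) ≤ 2δ*(I). Then the squared maximum mean discrepancy between the full empirical distribution and the subsampled empirical distribution satisfies (p − w_I)ᵀ K (p − w_I) ≤ 2λ*/n. -/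
open Matrix Finset

variable {N : ℕ}

/-- The uniform weight vector of an index set `I`: entries `1/|I|` on `I` and `0` elsewhere. -/
noncomputable def wI (I : Finset (Fin N)) : Fin N → ℝ :=
  fun i => if i ∈ I then 1 / (I.card : ℝ) else 0

/-- `M = (1/N²) Σ_{i,j=1}^N K_{ij}`. -/
noncomputable def Mavg (K : Matrix (Fin N) (Fin N) ℝ) : ℝ :=
  (1 / (N : ℝ) ^ 2) * ∑ i, ∑ j, K i j

/-- `δ*(I) = (1/(nN)) Σ_{i∈I} Σ_{j=1}^N K_{ij}` where `n = |I|`. -/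
noncomputable def deltaStar (K : Matrix (Fin N) (Fin N) ℝ) (I : Finset (Fin N)) : ℝ :=
  (1 / ((I.card : ℝ) * N)) * ∑ i ∈ I, ∑ j, K i j

/-- `ε*(I) = M − (1/n²) Σ_{i,j∈I} K_{ij}` where `n = |I|`. -/
noncomputable def epsStar (K : Matrix (Fin N) (Fin N) ℝ) (I : Finset (Fin N)) : ℝ :=
  Mavg K - (1 / (I.card : ℝ) ^ 2) * ∑ i ∈ I, ∑ j ∈ I, K i j


/-- Rayleigh bound: for a PSD matrix whose eigenvalues are all at most `lam`,
the quadratic form is bounded by `lam` times the squared norm. -/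
lemma quad_le_lam {N : ℕ} (K : Matrix (Fin N) (Fin N) ℝ) (hK : K.PosSemidef) (lam : ℝ)
    (hlam : IsGreatest (Set.range hK.isHermitian.eigenvalues) lam) (x : Fin N → ℝ) :
    x ⬝ᵥ (K *ᵥ x) ≤ lam * (x ⬝ᵥ x) := by
  classical
  set hH := hK.isHermitian
  set U : Matrix (Fin N) (Fin N) ℝ := (hH.eigenvectorUnitary : Matrix (Fin N) (Fin N) ℝ)
  have hB : (lam • (1 : Matrix (Fin N) (Fin N) ℝ) - K).PosSemidef := by
    have hDiag : (Matrix.diagonal (fun i => lam - hH.eigenvalues i)).PosSemidef :=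
      Matrix.posSemidef_diagonal_iff.mpr fun i => sub_nonneg.mpr (hlam.2 ⟨i, rfl⟩)
    have h1 : U * star U = 1 := (Matrix.mem_unitaryGroup_iff).mp hH.eigenvectorUnitary.2
    have := hDiag.mul_mul_conjTranspose_same U
    have heq : U * Matrix.diagonal (fun i => lam - hH.eigenvalues i) * Uᴴ
        = lam • (1 : Matrix (Fin N) (Fin N) ℝ) - K := by
      have hspec : K = U * Matrix.diagonal (RCLike.ofReal ∘ hH.eigenvalues) * Uᴴ :=
        hH.spectral_theorem
      have : Matrix.diagonal (fun i => lam - hH.eigenvalues i)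
          = lam • (1 : Matrix (Fin N) (Fin N) ℝ)
            - Matrix.diagonal (RCLike.ofReal ∘ hH.eigenvalues) := by
        ext i j
        by_cases h : i = j <;> simp [Matrix.diagonal, h, Matrix.one_apply]
      rw [this, Matrix.mul_sub, Matrix.sub_mul, ← hspec]
      congr 1
      rw [Matrix.mul_smul, Matrix.mul_one, Matrix.smul_mul]
      rw [show (Uᴴ : Matrix (Fin N) (Fin N) ℝ) = star U from rfl, h1]
    rwa [heq] at this
  have h0 := hB.dotProduct_mulVec_nonneg x
  simp only [star_trivial] at h0
  rw [Matrix.sub_mulVec, Matrix.smul_mulVec, Matrix.one_mulVec, dotProduct_sub,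
    dotProduct_smul] at h0
  simp only [smul_eq_mul] at h0
  linarith

lemma wI_dot_K_wI {N : ℕ} (K : Matrix (Fin N) (Fin N) ℝ) (I : Finset (Fin N)) :
    (wI I) ⬝ᵥ (K *ᵥ (wI I)) = (1 / (I.card : ℝ) ^ 2) * ∑ i ∈ I, ∑ j ∈ I, K i j := by
  simp only [dotProduct, mulVec, dotProduct, wI, ite_mul, mul_ite, zero_mul, mul_zero,
    Finset.sum_ite_mem, Finset.univ_inter]
  rw [Finset.mul_sum]
  refine Finset.sum_congr rfl fun i hi => ?_
  rw [Finset.mul_sum, Finset.mul_sum]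
  refine Finset.sum_congr rfl fun j hj => ?_
  ring

lemma wI_dot_K_p {N : ℕ} (K : Matrix (Fin N) (Fin N) ℝ) (I : Finset (Fin N)) (p : Fin N → ℝ)
    (hp : p = fun _ => 1 / (N : ℝ)) :
    (wI I) ⬝ᵥ (K *ᵥ p) = (1 / ((I.card : ℝ) * N)) * ∑ i ∈ I, ∑ j, K i j := by
  simp only [dotProduct, mulVec, dotProduct, wI, hp, ite_mul, zero_mul,
    Finset.sum_ite_mem, Finset.univ_inter]
  rw [Finset.mul_sum]
  refine Finset.sum_congr rfl fun i hi => ?_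
  rw [Finset.mul_sum, Finset.mul_sum]
  refine Finset.sum_congr rfl fun j hj => ?_
  ring

lemma p_dot_K_wI {N : ℕ} (K : Matrix (Fin N) (Fin N) ℝ) (hK : K.IsHermitian)
    (I : Finset (Fin N)) (p : Fin N → ℝ) (hp : p = fun _ => 1 / (N : ℝ)) :
    p ⬝ᵥ (K *ᵥ (wI I)) = (1 / ((I.card : ℝ) * N)) * ∑ i ∈ I, ∑ j, K i j := by
  have hsym : ∀ i j, K i j = K j i :=
    fun i j => ((hK.apply i j).symm.trans (star_trivial _))
  simp only [dotProduct, mulVec, dotProduct, wI, hp, mul_ite, ite_mul, zero_mul, mul_zero,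
    Finset.sum_ite_mem, Finset.univ_inter]
  simp_rw [Finset.mul_sum]
  rw [Finset.sum_comm]
  refine Finset.sum_congr rfl fun i hi => ?_
  refine Finset.sum_congr rfl fun j hj => ?_
  rw [hsym j i]; ring

lemma p_dot_K_p {N : ℕ} (K : Matrix (Fin N) (Fin N) ℝ) (p : Fin N → ℝ)
    (hp : p = fun _ => 1 / (N : ℝ)) :
    p ⬝ᵥ (K *ᵥ p) = (1 / (N : ℝ) ^ 2) * ∑ i, ∑ j, K i j := by
  simp only [dotProduct, mulVec, dotProduct, hp]
  rw [Finset.mul_sum]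
  refine Finset.sum_congr rfl fun i _ => ?_
  rw [Finset.mul_sum, Finset.mul_sum]
  refine Finset.sum_congr rfl fun j _ => ?_
  ring

/-- for a symmetric PSD matrix `K` with largest eigenvalue `λ*`, the uniform
vector `p` on all `N` points, and a nonempty index set `I` with `|I| = n` satisfying
`ε*(I) ≤ 2δ*(I)`, the squared MMD between the full and subsampled empirical distributions
satisfies `(p − w_I)ᵀ K (p − w_I) ≤ 2λ*/n`. -/
theorem mmd_full_sub_le (K : Matrix (Fin N) (Fin N) ℝ)
    (hK : K.PosSemidef) (lam : ℝ)
    (hlam : IsGreatest (Set.range hK.isHermitian.eigenvalues) lam)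
    (p : Fin N → ℝ) (hp : p = fun _ => 1 / (N : ℝ))
    (I : Finset (Fin N)) (hI : I.Nonempty) (n : ℕ) (hn : I.card = n)
    (hassum : epsStar K I ≤ 2 * deltaStar K I) :
    (p - wI I) ⬝ᵥ (K *ᵥ (p - wI I)) ≤ 2 * lam / n := by
  have hn0 : 0 < n := hn ▸ Finset.card_pos.mpr hI
  have hnR : (0 : ℝ) < n := Nat.cast_pos.mpr hn0
  -- expand the quadratic form
  have hexp : (p - wI I) ⬝ᵥ (K *ᵥ (p - wI I))
      = Mavg K - 2 * deltaStar K I + (wI I) ⬝ᵥ (K *ᵥ (wI I)) := by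
    simp only [Matrix.mulVec_sub, sub_dotProduct, dotProduct_sub]
    rw [p_dot_K_p K p hp, p_dot_K_wI K hK.isHermitian I p hp, wI_dot_K_p K I p hp]
    unfold Mavg deltaStar
    ring
  have hS : (wI I) ⬝ᵥ (K *ᵥ (wI I)) = (1 / (I.card : ℝ) ^ 2) * ∑ i ∈ I, ∑ j ∈ I, K i j :=
    wI_dot_K_wI K I
  have heps : Mavg K - (wI I) ⬝ᵥ (K *ᵥ (wI I)) = epsStar K I := by
    rw [hS]; unfold epsStar; ring
  have hstep : (p - wI I) ⬝ᵥ (K *ᵥ (p - wI I)) ≤ 2 * ((wI I) ⬝ᵥ (K *ᵥ (wI I))) := by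
    linarith [hexp, heps, hassum]
  have hquad := quad_le_lam K hK lam hlam (wI I)
  have hww : (wI I) ⬝ᵥ (wI I) = 1 / (n : ℝ) := by
    simp only [dotProduct, wI, ite_mul, mul_ite, zero_mul, mul_zero,
      Finset.sum_ite_mem, Finset.univ_inter, Finset.sum_const, nsmul_eq_mul, hn]
    field_simp
    rw [Finset.inter_self, hn]
  calc (p - wI I) ⬝ᵥ (K *ᵥ (p - wI I)) ≤ 2 * ((wI I) ⬝ᵥ (K *ᵥ (wI I))) := hstep
    _ ≤ 2 * (lam * ((wI I) ⬝ᵥ (wI I))) := by linarith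
    _ = 2 * lam / n := by rw [hww]; field_simp
end
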